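/- arXiv:2401.03197 — 7 statements merged into one kernel-verified Lean document; each statement's English description precedes it below -/
import Mathlib

section
/- Let M and M' be two MDPs with the same finite state space S, action space A, reward function r, and discount factor γ < 1, differing only in their transition kernels T and T'. Suppose |r(s,a)| ≤ R for all s,a, and for all s,a: Σ_{s'} |T'(s,a,s') - T(s,a,s')| ≤ η. Then the optimal action-value functions satisfy |Q'(s,a) - Q(s,a)| ≤ γ·η·R/(1-γ)² for all states s and actions a. -/
/-!
Both `Q` and `Q'` are fixed points of `γ`-contractions in the sup norm. First, the Bellman
equation gives `‖Q'‖ ≤ R + γ ‖Q'‖`, so `‖Q'‖ ≤ R / (1 - γ)`. Then, writing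
`Q' - Q = γ (∑ (T' - T) V' + ∑ T (V' - V))`, the first sum is at most `η R / (1 - γ)` and the
second at most `‖Q' - Q‖`, since `max` is `1`-Lipschitz for the sup norm. Hence
`‖Q' - Q‖ ≤ γ η R / (1 - γ) + γ ‖Q' - Q‖`.
-/

open Finset

section WeightedSums

variable {ι : Type*} [Fintype ι]

theorem abs_sum_mul_le_of_sum_abs_le {w f : ι → ℝ} {η C : ℝ} (hw : ∑ i, |w i| ≤ η)
    (hC : 0 ≤ C) (hf : ∀ i, |f i| ≤ C) : |∑ i, w i * f i| ≤ η * C :=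
  calc |∑ i, w i * f i| ≤ ∑ i, |w i| * |f i| := by
        simpa only [abs_mul] using abs_sum_le_sum_abs (fun i => w i * f i) univ
    _ ≤ ∑ i, |w i| * C := by gcongr with i; exact hf i
    _ ≤ η * C := by rw [← sum_mul]; gcongr

theorem abs_sum_mul_le_of_stochastic {K f : ι → ℝ} {C : ℝ} (hK0 : ∀ i, 0 ≤ K i)
    (hK1 : ∑ i, K i = 1) (hf : ∀ i, |f i| ≤ C) : |∑ i, K i * f i| ≤ C :=
  calc |∑ i, K i * f i| ≤ ∑ i, K i * |f i| := by
        simpa only [abs_mul, abs_of_nonneg (hK0 _)] using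
          abs_sum_le_sum_abs (fun i => K i * f i) univ
    _ ≤ ∑ i, K i * C := by gcongr with i; exacts [hK0 i, hf i]
    _ = C := by rw [← sum_mul, hK1, one_mul]

end WeightedSums

section Sup

variable {α : Type*} {s : Finset α} {f g : α → ℝ} {C : ℝ}

theorem Finset.abs_sup'_le (hs : s.Nonempty) (h : ∀ a ∈ s, |f a| ≤ C) : |s.sup' hs f| ≤ C := by
  obtain ⟨a, ha⟩ := hs
  refine abs_le.2 ⟨?_, sup'_le _ _ fun b hb => (abs_le.1 (h b hb)).2⟩
  exact (abs_le.1 (h a ha)).1.trans (le_sup' f ha)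

theorem Finset.abs_sup'_sub_sup'_le (hs : s.Nonempty) (h : ∀ a ∈ s, |f a - g a| ≤ C) :
    |s.sup' hs f - s.sup' hs g| ≤ C := by
  have hfg : s.sup' hs f ≤ s.sup' hs g + C := sup'_le _ _ fun a ha =>
    by linarith [(abs_le.1 (h a ha)).2, le_sup' g ha]
  have hgf : s.sup' hs g ≤ s.sup' hs f + C := sup'_le _ _ fun a ha =>
    by linarith [(abs_le.1 (h a ha)).1, le_sup' f ha]
  exact abs_sub_le_iff.2 ⟨by linarith, by linarith⟩

end Sup

theorem le_div_one_sub_of_forall_le_imp {ι : Type*} [Finite ι] {u : ι → ℝ} {c γ : ℝ}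
    (hγ : γ < 1) (h : ∀ M, (∀ i, u i ≤ M) → ∀ i, u i ≤ c + γ * M) (i : ι) :
    u i ≤ c / (1 - γ) := by
  have : Nonempty ι := ⟨i⟩
  obtain ⟨j, hj⟩ := Finite.exists_max u
  have hself : u j ≤ c + γ * u j := h (u j) hj j
  rw [le_div_iff₀ (by linarith)]
  nlinarith [hj i]

theorem sum_sub_mul_add_sum_mul_sub {ι : Type*} [Fintype ι] (w w' f f' : ι → ℝ) :
    ∑ i, (w' i - w i) * f' i + ∑ i, w i * (f' i - f i) = ∑ i, w' i * f' i - ∑ i, w i * f i := by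
  rw [← sum_add_distrib, ← sum_sub_distrib]
  exact sum_congr rfl fun i _ => by ring

section MDP

variable {S A : Type*} [Fintype A] [Nonempty A]

noncomputable def stateValue (Q : S → A → ℝ) (s : S) : ℝ :=
  univ.sup' univ_nonempty (Q s)

theorem abs_stateValue_le {Q : S → A → ℝ} {C : ℝ} (hQ : ∀ s a, |Q s a| ≤ C) (s : S) :
    |stateValue Q s| ≤ C :=
  abs_sup'_le _ fun a _ => hQ s a

theorem abs_stateValue_sub_le {Q Q' : S → A → ℝ} {C : ℝ} (hQ : ∀ s a, |Q' s a - Q s a| ≤ C)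
    (s : S) : |stateValue Q' s - stateValue Q s| ≤ C :=
  abs_sup'_sub_sup'_le _ fun a _ => hQ s a

theorem abs_le_of_bellman [Fintype S] {T : S → A → S → ℝ} {r Q : S → A → ℝ} {γ R : ℝ}
    (hγ0 : 0 ≤ γ) (hγ1 : γ < 1) (hT0 : ∀ s a s', 0 ≤ T s a s') (hT1 : ∀ s a, ∑ s', T s a s' = 1)
    (hR : ∀ s a, |r s a| ≤ R)
    (hQ : ∀ s a, Q s a = r s a + γ * ∑ s', T s a s' * stateValue Q s') (s : S) (a : A) :
    |Q s a| ≤ R / (1 - γ) := by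
  refine le_div_one_sub_of_forall_le_imp (u := fun p : S × A => |Q p.1 p.2|) hγ1
    (fun M hM p => ?_) (s, a)
  have hV := abs_sum_mul_le_of_stochastic (hT0 p.1 p.2) (hT1 p.1 p.2)
    (abs_stateValue_le (fun s a => hM (s, a)))
  calc |Q p.1 p.2| ≤ |r p.1 p.2| + γ * |∑ s', T p.1 p.2 s' * stateValue Q s'| := by
        rw [hQ, ← abs_of_nonneg hγ0, ← abs_mul, abs_of_nonneg hγ0]
        exact abs_add_le _ _
    _ ≤ R + γ * M := by gcongr; exact hR _ _

end MDP

/-- Perturbation bound for optimal action-value functions of two MDPs that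
differ only in their transition kernels. -/
theorem q_perturbation_bound
    {S A : Type*} [Fintype S] [Fintype A] [Nonempty A]
    (T T' : S → A → S → ℝ) (r : S → A → ℝ) (γ R η : ℝ)
    (hγ0 : 0 ≤ γ) (hγ1 : γ < 1)
    (hT0 : ∀ s a s', 0 ≤ T s a s') (hT1 : ∀ s a, ∑ s', T s a s' = 1)
    (hT'0 : ∀ s a s', 0 ≤ T' s a s') (hT'1 : ∀ s a, ∑ s', T' s a s' = 1)
    (hR : ∀ s a, |r s a| ≤ R)
    (hη : ∀ s a, ∑ s', |T' s a s' - T s a s'| ≤ η)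
    (Q Q' : S → A → ℝ)
    (hQ : ∀ s a, Q s a =
      r s a + γ * ∑ s', T s a s' *
        (Finset.univ.sup' Finset.univ_nonempty (fun a' => Q s' a')))
    (hQ' : ∀ s a, Q' s a =
      r s a + γ * ∑ s', T' s a s' *
        (Finset.univ.sup' Finset.univ_nonempty (fun a' => Q' s' a'))) :
    ∀ s a, |Q' s a - Q s a| ≤ γ * η * R / (1 - γ) ^ 2 := by
  intro s a
  change ∀ s a, Q s a = r s a + γ * ∑ s', T s a s' * stateValue Q s' at hQ
  change ∀ s a, Q' s a = r s a + γ * ∑ s', T' s a s' * stateValue Q' s' at hQ'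
  have hV' : ∀ s', |stateValue Q' s'| ≤ R / (1 - γ) :=
    abs_stateValue_le (abs_le_of_bellman hγ0 hγ1 hT'0 hT'1 hR hQ')
  have hRγ : 0 ≤ R / (1 - γ) := (abs_nonneg _).trans (hV' s)
  rw [pow_two, ← div_div]
  refine le_div_one_sub_of_forall_le_imp (u := fun p : S × A => |Q' p.1 p.2 - Q p.1 p.2|) hγ1
    (fun M hM p => ?_) (s, a)
  have hsplit : Q' p.1 p.2 - Q p.1 p.2 =
      γ * (∑ s', (T' p.1 p.2 s' - T p.1 p.2 s') * stateValue Q' s'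
        + ∑ s', T p.1 p.2 s' * (stateValue Q' s' - stateValue Q s')) := by
    rw [hQ', hQ, sum_sub_mul_add_sum_mul_sub]
    ring
  have hkernel := abs_sum_mul_le_of_sum_abs_le (hη p.1 p.2) hRγ hV'
  have hvalue := abs_sum_mul_le_of_stochastic (hT0 p.1 p.2) (hT1 p.1 p.2)
    (abs_stateValue_sub_le (fun s a => hM (s, a)))
  calc |Q' p.1 p.2 - Q p.1 p.2| ≤ γ * (η * (R / (1 - γ)) + M) := by
        rw [hsplit, abs_mul, abs_of_nonneg hγ0]
        gcongr
        exact (abs_add_le _ _).trans (add_le_add hkernel hvalue)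
    _ = γ * η * R / (1 - γ) + γ * M := by ring
end

section
/- Let M, M' be MDPs as above with γ < 1 and |r(s,a)| ≤ R. Define finite-horizon value functions by Q_1(s,a) = r(s,a), V_n(s) = max_a Q_n(s,a), and Q_n(s,a) = r(s,a) + γ Σ_{s'} T(s,a,s') V_{n-1}(s'), with analogous definitions Q'_n, V'_n for M'. If Σ_{s'} |T'(s,a,s') - T(s,a,s')| ≤ η for all s,a, and κ_{n-1} := max_s |V'_{n-1}(s) - V_{n-1}(s)|, then for all s,a: |Q'_n(s,a) - Q_n(s,a)| ≤ γ(η·R/(1-γ) + κ_{n-1}). -/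
open Finset

section StochasticVectors

variable {ι : Type*} [Fintype ι]

theorem abs_sum_mul_le_sum_abs_mul {d v : ι → ℝ} {B : ℝ} (hv : ∀ i, |v i| ≤ B) :
    |∑ i, d i * v i| ≤ (∑ i, |d i|) * B := by
  rw [sum_mul]
  refine (abs_sum_le_sum_abs _ _).trans (sum_le_sum fun i _ => ?_)
  rw [abs_mul]
  exact mul_le_mul_of_nonneg_left (hv i) (abs_nonneg _)

theorem abs_sum_stochastic_mul_le {p w : ι → ℝ} {κ : ℝ} (hp0 : ∀ i, 0 ≤ p i)
    (hp1 : ∑ i, p i = 1) (hw : ∀ i, |w i| ≤ κ) : |∑ i, p i * w i| ≤ κ := by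
  simpa [abs_of_nonneg (hp0 _), hp1] using abs_sum_mul_le_sum_abs_mul (d := p) hw

theorem abs_sum_mul_sub_sum_mul_le {p p' v v' : ι → ℝ} {η B κ : ℝ}
    (hp'0 : ∀ i, 0 ≤ p' i) (hp'1 : ∑ i, p' i = 1) (hη : ∑ i, |p' i - p i| ≤ η) (hB : 0 ≤ B)
    (hv : ∀ i, |v i| ≤ B) (hκ : ∀ i, |v' i - v i| ≤ κ) :
    |∑ i, p' i * v' i - ∑ i, p i * v i| ≤ η * B + κ := by
  have split : ∑ i, p' i * v' i - ∑ i, p i * v i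
      = ∑ i, (p' i - p i) * v i + ∑ i, p' i * (v' i - v i) := by
    rw [← sum_add_distrib, ← sum_sub_distrib]
    exact sum_congr rfl fun i _ => by ring
  calc |∑ i, p' i * v' i - ∑ i, p i * v i|
      ≤ |∑ i, (p' i - p i) * v i| + |∑ i, p' i * (v' i - v i)| := split ▸ abs_add_le _ _
    _ ≤ (∑ i, |p' i - p i|) * B + κ :=
        add_le_add (abs_sum_mul_le_sum_abs_mul hv) (abs_sum_stochastic_mul_le hp'0 hp'1 hκ)
    _ ≤ η * B + κ := by gcongr

end StochasticVectors

theorem finite_horizon_q_bound_general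
    {S A : Type*} [Fintype S]
    (T T' : S → A → S → ℝ) (r : S → A → ℝ) (γ R η κ : ℝ)
    (hγ0 : 0 ≤ γ)
    (hT'0 : ∀ s a s', 0 ≤ T' s a s') (hT'1 : ∀ s a, ∑ s', T' s a s' = 1)
    (hη : ∀ s a, ∑ s', |T' s a s' - T s a s'| ≤ η)
    (V V' : S → ℝ)
    (hVbound : ∀ s, |V s| ≤ R / (1 - γ))
    (hκ : ∀ s, |V' s - V s| ≤ κ)
    (Qn Qn' : S → A → ℝ)
    (hQn : ∀ s a, Qn s a = r s a + γ * ∑ s', T s a s' * V s')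
    (hQn' : ∀ s a, Qn' s a = r s a + γ * ∑ s', T' s a s' * V' s') :
    ∀ s a, |Qn' s a - Qn s a| ≤ γ * (η * R / (1 - γ) + κ) := by
  intro s a
  have hB : 0 ≤ R / (1 - γ) := (abs_nonneg _).trans (hVbound s)
  have hdiff : Qn' s a - Qn s a
      = γ * (∑ s', T' s a s' * V' s' - ∑ s', T s a s' * V s') := by
    rw [hQn, hQn']
    ring
  rw [hdiff, abs_mul, abs_of_nonneg hγ0, mul_div_assoc]
  exact mul_le_mul_of_nonneg_left
    (abs_sum_mul_sub_sum_mul_le (hT'0 s a) (hT'1 s a) (hη s a) hB hVbound hκ) hγ0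

/-- One-step finite-horizon perturbation bound: if the previous-horizon value
functions differ by at most `κ`, the next-horizon Q functions differ by at most
`γ (η R / (1 - γ) + κ)`. -/
theorem finite_horizon_q_bound
    {S A : Type*} [Fintype S]
    (T T' : S → A → S → ℝ) (r : S → A → ℝ) (γ R η κ : ℝ)
    (hγ0 : 0 ≤ γ) (hγ1 : γ < 1)
    (hT0 : ∀ s a s', 0 ≤ T s a s') (hT1 : ∀ s a, ∑ s', T s a s' = 1)
    (hT'0 : ∀ s a s', 0 ≤ T' s a s') (hT'1 : ∀ s a, ∑ s', T' s a s' = 1)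
    (hη : ∀ s a, ∑ s', |T' s a s' - T s a s'| ≤ η)
    (V V' : S → ℝ)
    (hVbound : ∀ s, |V s| ≤ R / (1 - γ))
    (hκ : ∀ s, |V' s - V s| ≤ κ)
    (Qn Qn' : S → A → ℝ)
    (hQn : ∀ s a, Qn s a = r s a + γ * ∑ s', T s a s' * V s')
    (hQn' : ∀ s a, Qn' s a = r s a + γ * ∑ s', T' s a s' * V' s') :
    ∀ s a, |Qn' s a - Qn s a| ≤ γ * (η * R / (1 - γ) + κ) :=
  finite_horizon_q_bound_general T T' r γ R η κ hγ0 hT'0 hT'1 hη V V' hVbound hκ Qn Qn' hQn hQn'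
end

section
/- Let Q_t: S × A → ℝ be the true action-value function at state s, and let Q_0, G: S × A → ℝ be two estimates satisfying |Q_0(s,a) - Q_t(s,a)| ≤ ε and |G(s,a) - Q_t(s,a)| ≤ δ for all a. Let a* = argmax_a Q_t(s,a), a' the second-best action, and ψ = Q_t(s,a*) - Q_t(s,a'). Fix α ∈ [0,1]. If αε + (1-α)δ ≤ ψ/2, then for every action a ≠ a*: αQ_0(s,a) + (1-α)G(s,a) ≤ αQ_0(s,a*) + (1-α)G(s,a*), i.e., PA-MCTS selects the optimal action. -/
/-!
The PA-MCTS score `α Q₀ + (1 - α) G` is a convex combination of two estimates of `Qₜ`, so it is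
within `η := α ε + (1 - α) δ` of `Qₜ` at every action. Any `a ≠ a*` has `Qₜ a ≤ Qₜ a' ≤ Qₜ a* - 2η`,
and an error of at most `η` on each side cannot close a gap of `2η`.
-/

section

variable {𝕜 : Type*} [Field 𝕜] [LinearOrder 𝕜] [IsStrictOrderedRing 𝕜]

theorem abs_convex_comb_sub_le {x y z ε δ α : 𝕜} (hα0 : 0 ≤ α) (hα1 : α ≤ 1)
    (hx : |x - z| ≤ ε) (hy : |y - z| ≤ δ) :
    |α * x + (1 - α) * y - z| ≤ α * ε + (1 - α) * δ :=
  calc |α * x + (1 - α) * y - z| = |α * (x - z) + (1 - α) * (y - z)| := by ring_nf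
    _ ≤ |α * (x - z)| + |(1 - α) * (y - z)| := abs_add_le _ _
    _ = α * |x - z| + (1 - α) * |y - z| := by
        rw [abs_mul, abs_mul, abs_of_nonneg hα0, abs_of_nonneg (sub_nonneg.mpr hα1)]
    _ ≤ α * ε + (1 - α) * δ := by gcongr

theorem le_of_abs_sub_le_of_two_mul_le_sub {a a' b b' η : 𝕜}
    (ha : |a - a'| ≤ η) (hb : |b - b'| ≤ η) (hgap : 2 * η ≤ b' - a') : a ≤ b := by
  linarith [(abs_le.mp ha).2, (abs_le.mp hb).1]

end

theorem pamcts_selects_optimal_general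
    {A : Type*}
    (Qt Q0 G : A → ℝ) (ε δ α : ℝ)
    (hε : ∀ a, |Q0 a - Qt a| ≤ ε)
    (hδ : ∀ a, |G a - Qt a| ≤ δ)
    (hα0 : 0 ≤ α) (hα1 : α ≤ 1)
    (astar asecond : A)
    (hsecond : ∀ a, a ≠ astar → Qt a ≤ Qt asecond)
    (hcond : α * ε + (1 - α) * δ ≤ (Qt astar - Qt asecond) / 2) :
    ∀ a, a ≠ astar →
      α * Q0 a + (1 - α) * G a ≤ α * Q0 astar + (1 - α) * G astar := by
  intro a ha
  have hscore : ∀ b, |α * Q0 b + (1 - α) * G b - Qt b| ≤ α * ε + (1 - α) * δ :=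
    fun b => abs_convex_comb_sub_le hα0 hα1 (hε b) (hδ b)
  refine le_of_abs_sub_le_of_two_mul_le_sub (hscore a) (hscore astar) ?_
  linarith [hsecond a ha]

/-- PA-MCTS one-step optimality: if `α ε + (1 - α) δ ≤ ψ / 2`, then the convex
combination of the stale Q-values and the MCTS estimates is maximized at the
optimal action. -/
theorem pamcts_selects_optimal
    {A : Type*} [Fintype A]
    (Qt Q0 G : A → ℝ) (ε δ α : ℝ)
    (hε : ∀ a, |Q0 a - Qt a| ≤ ε)
    (hδ : ∀ a, |G a - Qt a| ≤ δ)
    (hα0 : 0 ≤ α) (hα1 : α ≤ 1)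
    (astar asecond : A)
    (hne : asecond ≠ astar)
    (hmax : ∀ a, a ≠ astar → Qt a ≤ Qt astar)
    (hsecond : ∀ a, a ≠ astar → Qt a ≤ Qt asecond)
    (hcond : α * ε + (1 - α) * δ ≤ (Qt astar - Qt asecond) / 2) :
    ∀ a, a ≠ astar →
      α * Q0 a + (1 - α) * G a ≤ α * Q0 astar + (1 - α) * G astar :=
  pamcts_selects_optimal_general Qt Q0 G ε δ α hε hδ hα0 hα1 astar asecond hsecond hcond
end

section
/- Let Q_t, Q_0, G: A → ℝ on a finite action set A with |Q_0(a) - Q_t(a)| ≤ ε for all a. Fix α ∈ [0,1], let ã = argmax_a [αQ_0(a) + (1-α)G(a)] and a_m = argmax_a G(a). Define ζ = (Q_0(ã) + G(ã)) - (Q_0(a_m) + G(a_m)). If ã ≠ a_m and 2ε ≤ ζ, then Q_t(ã) ≥ Q_t(a_m). -/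
lemma sub_sub_two_mul_le_sub_of_abs_sub_le {ι : Type*} {f g : ι → ℝ} {ε : ℝ} {a b : ι}
    (ha : |f a - g a| ≤ ε) (hb : |f b - g b| ≤ ε) :
    f a - f b - 2 * ε ≤ g a - g b := by
  linarith [abs_le.1 ha, abs_le.1 hb]

theorem pamcts_better_than_mcts_general
    {A : Type*}
    (Qt Q0 G : A → ℝ) (ε : ℝ)
    (hε : ∀ a, |Q0 a - Qt a| ≤ ε)
    (atilde am : A)
    (hm : ∀ a, G a ≤ G am)
    (hζ : 2 * ε ≤ (Q0 atilde + G atilde) - (Q0 am + G am)) :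
    Qt atilde ≥ Qt am := by
  have hQ0 : 2 * ε ≤ Q0 atilde - Q0 am := by linarith [hm atilde]
  have hQt := sub_sub_two_mul_le_sub_of_abs_sub_le (hε atilde) (hε am)
  linarith

/-- If PA-MCTS and pure MCTS choose different actions and `2 ε ≤ ζ`, the
PA-MCTS action has true value at least that of the MCTS action. -/
theorem pamcts_better_than_mcts
    {A : Type*} [Fintype A]
    (Qt Q0 G : A → ℝ) (ε α : ℝ) (hε0 : 0 ≤ ε)
    (hε : ∀ a, |Q0 a - Qt a| ≤ ε)
    (hα0 : 0 ≤ α) (hα1 : α ≤ 1)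
    (atilde am : A)
    (htilde : ∀ a, α * Q0 a + (1 - α) * G a ≤ α * Q0 atilde + (1 - α) * G atilde)
    (hm : ∀ a, G a ≤ G am)
    (hne : atilde ≠ am)
    (hζ : 2 * ε ≤ (Q0 atilde + G atilde) - (Q0 am + G am)) :
    Qt atilde ≥ Qt am :=
  pamcts_better_than_mcts_general Qt Q0 G ε hε atilde am hm hζ
end

section
/- Let Q_t, Q_0, G: A → ℝ on a finite action set A with |G(a) - Q_t(a)| ≤ δ for all a. Fix α ∈ [0,1], let ã = argmax_a [αQ_0(a) + (1-α)G(a)] and a_g = argmax_a Q_0(a). Define ζ = (Q_0(ã) + G(ã)) - (Q_0(a_g) + G(a_g)). If ã ≠ a_g and 2δ ≤ ζ, then Q_t(ã) ≥ Q_t(a_g). -/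
theorem le_of_abs_sub_le_of_two_mul_le_sub_s10 {f g : ℝ} {a b : ℝ} {δ : ℝ}
    (ha : |f - a| ≤ δ) (hb : |g - b| ≤ δ) (hfg : 2 * δ ≤ f - g) : b ≤ a := by
  linarith [(abs_le.mp ha).2, (abs_le.mp hb).1]

theorem pamcts_better_than_greedy_general
    {A : Type*}
    (Qt Q0 G : A → ℝ) (δ : ℝ)
    (hδ : ∀ a, |G a - Qt a| ≤ δ)
    (atilde ag : A)
    (hg : ∀ a, Q0 a ≤ Q0 ag)
    (hζ : 2 * δ ≤ (Q0 atilde + G atilde) - (Q0 ag + G ag)) :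
    Qt atilde ≥ Qt ag := by
  -- `ag` maximizes `Q0`, so the whole margin `ζ` is carried by `G`.
  have hG : 2 * δ ≤ G atilde - G ag := by linarith [hg atilde]
  exact le_of_abs_sub_le_of_two_mul_le_sub_s10 (hδ atilde) (hδ ag) hG

/-- If PA-MCTS and the greedy policy under stale Q-values choose different
actions and `2 δ ≤ ζ`, the PA-MCTS action has true value at least that of the
greedy action. -/
theorem pamcts_better_than_greedy
    {A : Type*} [Fintype A]
    (Qt Q0 G : A → ℝ) (δ α : ℝ) (hδ0 : 0 ≤ δ)
    (hδ : ∀ a, |G a - Qt a| ≤ δ)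
    (hα0 : 0 ≤ α) (hα1 : α ≤ 1)
    (atilde ag : A)
    (htilde : ∀ a, α * Q0 a + (1 - α) * G a ≤ α * Q0 atilde + (1 - α) * G atilde)
    (hg : ∀ a, Q0 a ≤ Q0 ag)
    (hne : atilde ≠ ag)
    (hζ : 2 * δ ≤ (Q0 atilde + G atilde) - (Q0 ag + G ag)) :
    Qt atilde ≥ Qt ag :=
  pamcts_better_than_greedy_general Qt Q0 G δ hδ atilde ag hg hζ
end

section
/- Let Q_t be the true optimal action-value function at state s with value V(s) = max_a Q_t(s,a), and let Q_0, G satisfy |Q_0(s,a) - Q_t(s,a)| ≤ ε and |G(s,a) - Q_t(s,a)| ≤ δ for all a. If action a satisfies αQ_0(s,a) + (1-α)G(s,a) ≥ αQ_0(s,a*) + (1-α)G(s,a*) where a* maximizes Q_t(s,·) and α ∈ [0,1], then V(s) - Q_t(s,a) ≤ 2(αε + (1-α)δ). -/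
/-!
The score `α Q0 + (1 - α) G` is itself a uniform approximation of `Qt`, to within the
convex combination `α ε + (1 - α) δ` of the two errors. An action whose score beats that of
`astar` can lose at most that error on each of the two actions, hence at most twice it in true value.
-/

section

variable {R : Type*} [CommRing R] [LinearOrder R] [IsStrictOrderedRing R]

theorem abs_convex_combination_sub_le {x y z ε δ α : R}
    (hx : |x - z| ≤ ε) (hy : |y - z| ≤ δ) (hα0 : 0 ≤ α) (hα1 : α ≤ 1) :
    |α * x + (1 - α) * y - z| ≤ α * ε + (1 - α) * δ := by
  have hβ : 0 ≤ 1 - α := sub_nonneg.mpr hα1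
  calc |α * x + (1 - α) * y - z| = |α * (x - z) + (1 - α) * (y - z)| := by ring_nf
    _ ≤ |α * (x - z)| + |(1 - α) * (y - z)| := abs_add_le _ _
    _ = α * |x - z| + (1 - α) * |y - z| := by
      rw [abs_mul, abs_mul, abs_of_nonneg hα0, abs_of_nonneg hβ]
    _ ≤ α * ε + (1 - α) * δ := by gcongr

theorem sub_le_two_mul_of_abs_sub_le_of_le {ι : Type*} {f g : ι → R} {η : R}
    (hfg : ∀ i, |f i - g i| ≤ η) {i j : ι} (hij : f i ≤ f j) :
    g i - g j ≤ 2 * η := by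
  have hi := (abs_le.mp (hfg i)).1
  have hj := (abs_le.mp (hfg j)).2
  linarith

end

theorem pamcts_action_suboptimality_general
    {A : Type*}
    (Qt Q0 G : A → ℝ) (ε δ α : ℝ)
    (hε : ∀ a, |Q0 a - Qt a| ≤ ε)
    (hδ : ∀ a, |G a - Qt a| ≤ δ)
    (hα0 : 0 ≤ α) (hα1 : α ≤ 1)
    (astar : A)
    (a : A)
    (ha : α * Q0 astar + (1 - α) * G astar ≤ α * Q0 a + (1 - α) * G a) :
    Qt astar - Qt a ≤ 2 * (α * ε + (1 - α) * δ) :=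
  sub_le_two_mul_of_abs_sub_le_of_le
    (f := fun b ↦ α * Q0 b + (1 - α) * G b)
    (fun b ↦ abs_convex_combination_sub_le (hε b) (hδ b) hα0 hα1) ha

/-- Any action whose convex-combination score is at least that of the truly
optimal action is at most `2 (α ε + (1 - α) δ)`-suboptimal in true value. -/
theorem pamcts_action_suboptimality
    {A : Type*} [Fintype A]
    (Qt Q0 G : A → ℝ) (ε δ α : ℝ)
    (hε0 : 0 ≤ ε) (hδ0 : 0 ≤ δ)
    (hε : ∀ a, |Q0 a - Qt a| ≤ ε)
    (hδ : ∀ a, |G a - Qt a| ≤ δ)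
    (hα0 : 0 ≤ α) (hα1 : α ≤ 1)
    (astar : A) (hmax : ∀ b, Qt b ≤ Qt astar)
    (a : A)
    (ha : α * Q0 astar + (1 - α) * G astar ≤ α * Q0 a + (1 - α) * G a) :
    Qt astar - Qt a ≤ 2 * (α * ε + (1 - α) * δ) :=
  pamcts_action_suboptimality_general Qt Q0 G ε δ α hε hδ hα0 hα1 astar a ha
end

section
/- Let V^{π̃,k} denote k applications of the Bellman operator for policy π̃ starting from the zero function, and V^{*,k} the k-step optimal value (k applications of the Bellman optimality operator from zero). If for every state s the one-step suboptimality of π̃ is bounded: V^{*,k}(s) - Q^{*,k}(s,π̃(s)) ≤ c for all k and s, then for all k and s: V^{π̃,k}(s) ≥ V^{*,k}(s) - Σ_{τ=0}^{k} γ^τ c. -/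
/-! Induction on `k`. Averaging the bound at horizon `k` under `P(· | s, π̃ s)` and discounting
gives `V^{π̃,k+1}(s) ≥ Q^{*,k+1}(s, π̃ s) - γ Σ_{τ ≤ k} γ^τ c`, and the suboptimality bound at
horizon `k + 1` costs one more `c`. -/

theorem sum_mul_sub_le_sum_mul_of_sub_le {ι R : Type*} [Fintype ι] [CommRing R] [PartialOrder R]
    [IsOrderedRing R] {p f g : ι → R} {b : R}
    (hp0 : ∀ i, 0 ≤ p i) (hp1 : ∑ i, p i = 1) (h : ∀ i, g i - b ≤ f i) :
    ∑ i, p i * g i - b ≤ ∑ i, p i * f i := by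
  have hshift : ∑ i, p i * (g i - b) = ∑ i, p i * g i - b := by
    simp only [mul_sub, Finset.sum_sub_distrib, ← Finset.sum_mul, hp1, one_mul]
  rw [← hshift]
  exact Finset.sum_le_sum fun i _ => mul_le_mul_of_nonneg_left (h i) (hp0 i)

theorem finite_horizon_policy_bound_general
    {S A : Type*} [Fintype S]
    (P : S → A → S → ℝ) (R : S → A → ℝ) (γ c : ℝ)
    (hγ0 : 0 ≤ γ)
    (hP0 : ∀ s a s', 0 ≤ P s a s') (hP1 : ∀ s a, ∑ s', P s a s' = 1)
    (π : S → A)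
    (Vπ : ℕ → S → ℝ) (Vstar : ℕ → S → ℝ) (Qstar : ℕ → S → A → ℝ)
    (hVπ0 : ∀ s, Vπ 0 s = R s (π s))
    (hVπrec : ∀ k s, Vπ (k + 1) s =
      R s (π s) + γ * ∑ s', P s (π s) s' * Vπ k s')
    (hQstar : ∀ k s a, Qstar (k + 1) s a =
      R s a + γ * ∑ s', P s a s' * Vstar k s')
    (hQstar0 : ∀ s a, Qstar 0 s a = R s a)
    (hπ : ∀ k s, Vstar k s - Qstar k s (π s) ≤ c) :
    ∀ k s, Vπ k s ≥ Vstar k s - (∑ τ ∈ Finset.range (k + 1), γ ^ τ) * c := by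
  intro k
  induction k with
  | zero =>
    intro s
    have hsub := hπ 0 s
    rw [hQstar0, ← hVπ0] at hsub
    simp only [zero_add, Finset.sum_range_one, pow_zero, one_mul]
    linarith
  | succ k ih =>
    intro s
    have havg := sum_mul_sub_le_sum_mul_of_sub_le (hP0 s (π s)) (hP1 s (π s)) ih
    have hsub := hπ (k + 1) s
    rw [hQstar] at hsub
    rw [hVπrec, geom_sum_succ]
    linarith [mul_le_mul_of_nonneg_left havg hγ0]

/-- Finite-horizon induction step: if the one-step suboptimality of `π̃` is
bounded by `c` at each horizon, the `k`-horizon value of `π̃` is within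
`∑_{τ=0}^{k} γ^τ c` of the `k`-horizon optimal value. -/
theorem finite_horizon_policy_bound
    {S A : Type*} [Fintype S] [Fintype A] [Nonempty A]
    (P : S → A → S → ℝ) (R : S → A → ℝ) (γ c : ℝ)
    (hγ0 : 0 ≤ γ) (hγ1 : γ < 1) (hc : 0 ≤ c)
    (hP0 : ∀ s a s', 0 ≤ P s a s') (hP1 : ∀ s a, ∑ s', P s a s' = 1)
    (π : S → A)
    (Vπ : ℕ → S → ℝ) (Vstar : ℕ → S → ℝ) (Qstar : ℕ → S → A → ℝ)
    (hVπ0 : ∀ s, Vπ 0 s = R s (π s))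
    (hVstar0 : ∀ s, Vstar 0 s =
      Finset.univ.sup' Finset.univ_nonempty (fun a => R s a))
    (hVπrec : ∀ k s, Vπ (k + 1) s =
      R s (π s) + γ * ∑ s', P s (π s) s' * Vπ k s')
    (hQstar : ∀ k s a, Qstar (k + 1) s a =
      R s a + γ * ∑ s', P s a s' * Vstar k s')
    (hVstarrec : ∀ k s, Vstar (k + 1) s =
      Finset.univ.sup' Finset.univ_nonempty (fun a => Qstar (k + 1) s a))
    (hQstar0 : ∀ s a, Qstar 0 s a = R s a)
    (hπ : ∀ k s, Vstar k s - Qstar k s (π s) ≤ c) :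
    ∀ k s, Vπ k s ≥ Vstar k s - (∑ τ ∈ Finset.range (k + 1), γ ^ τ) * c :=
  finite_horizon_policy_bound_general P R γ c hγ0 hP0 hP1 π Vπ Vstar Qstar hVπ0 hVπrec hQstar
    hQstar0 hπ
end
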